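/- arXiv:1203.5645 — 3 statements merged into one kernel-verified Lean document; each statement's English description precedes it below -/
import Mathlib

section
/- Let H be a finitely generated module over Z[t,t^{-1}] such that multiplication by (1-t) is a module automorphism of H. Then H is a torsion Z[t,t^{-1}]-module. -/
open LaurentPolynomial

/-- A finitely generated `ℤ[t,t⁻¹]`-module `H` on which multiplication by
`1 - t` is an automorphism is a torsion `ℤ[t,t⁻¹]`-module: every element is annihilated by some
nonzero Laurent polynomial. -/
theorem torsion_of_finite_of_one_sub_t_automorphism {H : Type*} [AddCommGroup H]
    [Module (LaurentPolynomial ℤ) H] [Module.Finite (LaurentPolynomial ℤ) H]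
    (hbij : Function.Bijective (fun h : H => ((1 : LaurentPolynomial ℤ) - T 1) • h)) :
    ∀ h : H, ∃ r : LaurentPolynomial ℤ, r ≠ 0 ∧ r • h = 0 := by
  set R := LaurentPolynomial ℤ
  set I : Ideal R := Ideal.span {(1 : R) - T 1}
  have hle : (⊤ : Submodule R H) ≤ I • ⊤ := by
    intro h _
    obtain ⟨h', hh'⟩ := hbij.2 h
    simp only at hh'
    rw [← hh']
    exact Submodule.smul_mem_smul (Ideal.subset_span rfl) Submodule.mem_top
  obtain ⟨r, hr1, hr0⟩ :=
    Submodule.exists_sub_one_mem_and_smul_eq_zero_of_fg_of_le_smul I ⊤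
      (Module.Finite.fg_top (R := R) (M := H)) hle
  -- augmentation map: evaluate at t = 1
  have hrne : r ≠ 0 := by
    intro h0
    obtain ⟨q, hq⟩ := Ideal.mem_span_singleton'.mp hr1
    let ε : R →ₐ[ℤ] ℤ := AddMonoidAlgebra.lift ℤ ℤ ℤ (1 : Multiplicative ℤ →* ℤ)
    have hT : ε (T 1) = 1 := by
      rw [show (T 1 : R) = AddMonoidAlgebra.single (1 : ℤ) (1 : ℤ) from rfl]
      rw [AddMonoidAlgebra.lift_single]
      simp
    have := congrArg ε hq
    rw [h0] at this
    simp [hT] at this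
  intro h
  exact ⟨r, hrne, hr0 h trivial⟩
end

section
/- Let R be the set {h ∈ H : ∃ q ∈ Q with (h, q) ∈ P} from the cancellation lemma for linking forms, where P = P^⊥ ⊆ H ⊕ H' and Q = Q^⊥ ⊆ H'. Then R is self-orthogonal: for all h₁, h₂ ∈ R, Bl(h₁, h₂) = 0. -/
open LaurentPolynomial

/-- In the setting of the cancellation lemma for linking forms: `(H, Bl)` and
`(H', Bl')` are nonsingular sesquilinear Hermitian linking forms over `ℚ[t,t⁻¹]` valued in `V`
(the role of `ℚ(t)/ℚ[t,t⁻¹]`); `P = P^⊥ ⊆ H ⊕ H'` is a metaboliser of `Bl ⊕ Bl'` and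
`Q = Q^⊥ ⊆ H'` is a metaboliser of `Bl'`.  Then
`R = {h ∈ H : ∃ q ∈ Q, (h,q) ∈ P}` is self-orthogonal: `Bl h₁ h₂ = 0` for all `h₁, h₂ ∈ R`. -/
theorem linking_form_R_self_orthogonal {H H' V : Type*}
    [AddCommGroup H] [Module (LaurentPolynomial ℚ) H]
    [AddCommGroup H'] [Module (LaurentPolynomial ℚ) H']
    [AddCommGroup V] [Module (LaurentPolynomial ℚ) V]
    (σ : LaurentPolynomial ℚ ≃+* LaurentPolynomial ℚ) (hσT : σ (T 1) = T (-1))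
    (conj : V ≃+ V) (hconj : ∀ v, conj (conj v) = v)
    (hconjσ : ∀ (a : LaurentPolynomial ℚ) (v : V), conj (a • v) = σ a • conj v)
    (Bl : H → H → V) (Bl' : H' → H' → V)
    (haddl : ∀ x y z : H, Bl (x + y) z = Bl x z + Bl y z)
    (haddr : ∀ x y z : H, Bl x (y + z) = Bl x y + Bl x z)
    (hsesql : ∀ (a : LaurentPolynomial ℚ) (x y : H), Bl (a • x) y = a • Bl x y)
    (hsesqr : ∀ (a : LaurentPolynomial ℚ) (x y : H), Bl x (a • y) = σ a • Bl x y)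
    (hherm : ∀ x y : H, Bl x y = conj (Bl y x))
    (hinj : ∀ x : H, (∀ w : H, Bl x w = 0) → x = 0)
    (haddl' : ∀ x y z : H', Bl' (x + y) z = Bl' x z + Bl' y z)
    (haddr' : ∀ x y z : H', Bl' x (y + z) = Bl' x y + Bl' x z)
    (hsesql' : ∀ (a : LaurentPolynomial ℚ) (x y : H'), Bl' (a • x) y = a • Bl' x y)
    (hsesqr' : ∀ (a : LaurentPolynomial ℚ) (x y : H'), Bl' x (a • y) = σ a • Bl' x y)
    (hherm' : ∀ x y : H', Bl' x y = conj (Bl' y x))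
    (hinj' : ∀ x : H', (∀ w : H', Bl' x w = 0) → x = 0)
    (P : Submodule (LaurentPolynomial ℚ) (H × H'))
    (hP : ∀ v : H × H', v ∈ P ↔ ∀ w ∈ P, Bl v.1 w.1 + Bl' v.2 w.2 = 0)
    (Q : Submodule (LaurentPolynomial ℚ) H')
    (hQ : ∀ v : H', v ∈ Q ↔ ∀ w ∈ Q, Bl' v w = 0) :
    ∀ h₁ h₂ : H, (∃ q ∈ Q, (h₁, q) ∈ P) → (∃ q ∈ Q, (h₂, q) ∈ P) →
      Bl h₁ h₂ = 0 := by
  rintro h₁ h₂ ⟨q₁, hq₁, hP₁⟩ ⟨q₂, hq₂, hP₂⟩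
  have h := (hP _).mp hP₁ _ hP₂
  have h0 : Bl' q₁ q₂ = 0 := (hQ _).mp hq₁ _ hq₂
  simpa [h0] using h
end

section
/- Let G and G† be groups each equipped with a surjection onto Z, and let G‡ = G *_Z G† be the amalgamated free product identifying the preferred generators (meridians). Suppose G/G^{(2)} ≅ Z ⋉ H and G†/(G†)^{(2)} ≅ Z ⋉ H† where H, H† are the respective Alexander modules and the identified elements map to (1,0) in each semidirect product. Then G‡/(G‡)^{(2)} ≅ Z ⋉ (H ⊕ H†), i.e. the metabelian quotient of the amalgamated product is the semidirect product of Z with the direct sum of the modules. -/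
/-!
Both groups are metabelian, so it suffices to write down mutually inverse homomorphisms.
Composing `G → G/G⁽²⁾ ≅ ℤ ⋉ H` and `G† → G†/G†⁽²⁾ ≅ ℤ ⋉ H†` with the inclusions into
`ℤ ⋉ (H ⊕ H†)` sends both meridians to the generator of `ℤ`, so they glue to a map out of the
amalgam, which kills the second derived subgroup. Conversely, `ℤ ⋉ H` and `ℤ ⋉ H†` map to
`G‡/G‡⁽²⁾` and the two maps agree on `ℤ` because the meridians are identified. Since `t - 1` is
surjective on `H`, every element of `H` is a commutator `[t, h]` in `ℤ ⋉ H`, so the images of `H`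
and `H†` lie in the derived subgroup of a metabelian group and therefore commute; this is exactly
what is needed to combine the two maps into one out of `ℤ ⋉ (H ⊕ H†)`.
-/

instance derivedSeriesNormal (G : Type*) [Group G] (n : ℕ) : (derivedSeries G n).Normal :=
  derivedSeries_normal G n

/-- The diagonal action of `ℤ` on a product `H × H†` of two (multiplicatively written)
abelian groups, each with a `ℤ`-action. -/
def prodAut {H H' : Type*} [CommGroup H] [CommGroup H']
    (φ : Multiplicative ℤ →* MulAut H) (φ' : Multiplicative ℤ →* MulAut H') :
    Multiplicative ℤ →* MulAut (H × H') where
  toFun n := MulEquiv.prodCongr (φ n) (φ' n)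
  map_one' := by
    ext x <;> simp [MulEquiv.prodCongr]
  map_mul' := by
    intro a b
    ext x <;> simp [MulEquiv.prodCongr]

open SemidirectProduct
open scoped commutatorElement

@[simp]
theorem prodAut_apply {H H' : Type*} [CommGroup H] [CommGroup H']
    (φ : Multiplicative ℤ →* MulAut H) (φ' : Multiplicative ℤ →* MulAut H') (z : Multiplicative ℤ)
    (p : H × H') : prodAut φ φ' z p = (φ z p.1, φ' z p.2) :=
  rfl

section DerivedSeries

variable {A B : Type*} [Group A] [Group B]

theorem derivedSeries_le_ker {n : ℕ} (f : A →* B) (hB : derivedSeries B n = ⊥) :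
    derivedSeries A n ≤ f.ker := by
  rw [← MonoidHom.comap_bot, ← hB, ← Subgroup.map_le_iff_le_comap]
  exact map_derivedSeries_le_derivedSeries f n

def derivedSeriesLift (n : ℕ) (f : A →* B) (hB : derivedSeries B n = ⊥) :
    A ⧸ derivedSeries A n →* B :=
  QuotientGroup.lift _ f (derivedSeries_le_ker f hB)

theorem derivedSeries_quotient_derivedSeries (n : ℕ) :
    derivedSeries (A ⧸ derivedSeries A n) n = ⊥ := by
  rw [← map_derivedSeries_eq (QuotientGroup.mk'_surjective (derivedSeries A n)) n,
    Subgroup.map_eq_bot_iff, QuotientGroup.ker_mk']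

def derivedSeriesMap (n : ℕ) (f : A →* B) : A ⧸ derivedSeries A n →* B ⧸ derivedSeries B n :=
  derivedSeriesLift n ((QuotientGroup.mk' _).comp f) (derivedSeries_quotient_derivedSeries n)

theorem commute_of_mem_derivedSeries_one (hA : derivedSeries A 2 = ⊥) {x y : A}
    (hx : x ∈ derivedSeries A 1) (hy : y ∈ derivedSeries A 1) : Commute x y := by
  have hxy : ⁅x, y⁆ ∈ derivedSeries A 2 := Subgroup.commutator_mem_commutator hx hy
  rwa [hA, Subgroup.mem_bot, commutatorElement_eq_one_iff_commute] at hxy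

end DerivedSeries

namespace SemidirectProduct

theorem derivedSeries_two_eq_bot {N G : Type*} [CommGroup N] [CommGroup G] (φ : G →* MulAut N) :
    derivedSeries (N ⋊[φ] G) 2 = ⊥ := by
  have hD : derivedSeries (N ⋊[φ] G) 1 ≤ (inl : N →* N ⋊[φ] G).range := by
    rw [range_inl_eq_ker_rightHom, derivedSeries_one]
    exact Abelianization.commutator_subset_ker _
  rw [derivedSeries_succ, eq_bot_iff, Subgroup.commutator_le]
  intro a ha b hb
  obtain ⟨n₁, rfl⟩ := hD ha
  obtain ⟨n₂, rfl⟩ := hD hb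
  rw [Subgroup.mem_bot, commutatorElement_eq_one_iff_commute]
  exact (Commute.all n₁ n₂).map inl

theorem inl_mem_commutator {N G : Type*} [Group N] [Group G] {φ : G →* MulAut N} {g : G}
    (hg : Function.Surjective fun n : N => φ g n * n⁻¹) (n : N) :
    inl n ∈ commutator (N ⋊[φ] G) := by
  obtain ⟨c, rfl⟩ := hg n
  have : (inl (φ g c * c⁻¹) : N ⋊[φ] G) = ⁅(inr g : N ⋊[φ] G), inl c⁆ := by
    rw [commutatorElement_def, map_mul, inl_aut, map_inv, map_inv]
  rw [this]
  exact Subgroup.commutator_mem_commutator (Subgroup.mem_top _) (Subgroup.mem_top _)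

theorem commute_map_inl_of_surjective {N N' G G' P : Type*} [Group N] [Group N'] [Group G]
    [Group G'] [Group P] {φ : G →* MulAut N} {φ' : G' →* MulAut N'} {g : G} {g' : G'}
    (f : N ⋊[φ] G →* P) (f' : N' ⋊[φ'] G' →* P) (hP : derivedSeries P 2 = ⊥)
    (hg : Function.Surjective fun n : N => φ g n * n⁻¹)
    (hg' : Function.Surjective fun n : N' => φ' g' n * n⁻¹) (n : N) (n' : N') :
    Commute (f (inl n)) (f' (inl n')) := by
  refine commute_of_mem_derivedSeries_one hP ?_ ?_ <;>
    refine map_derivedSeries_le_derivedSeries _ 1 (Subgroup.mem_map_of_mem _ ?_) <;>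
    rw [derivedSeries_one]
  exacts [inl_mem_commutator hg n, inl_mem_commutator hg' n']

section Prod

variable {H H' P : Type*} [CommGroup H] [CommGroup H'] [Group P]
  {φ : Multiplicative ℤ →* MulAut H} {φ' : Multiplicative ℤ →* MulAut H'}

variable (φ φ') in
def inlProd : H ⋊[φ] Multiplicative ℤ →* (H × H') ⋊[prodAut φ φ'] Multiplicative ℤ :=
  map (MonoidHom.inl H H') (MonoidHom.id _) fun z => by ext <;> simp

variable (φ φ') in
def inrProd : H' ⋊[φ'] Multiplicative ℤ →* (H × H') ⋊[prodAut φ φ'] Multiplicative ℤ :=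
  map (MonoidHom.inr H H') (MonoidHom.id _) fun z => by ext <;> simp

theorem prod_hom_ext {f g : (H × H') ⋊[prodAut φ φ'] Multiplicative ℤ →* P}
    (hl : f.comp (inlProd φ φ') = g.comp (inlProd φ φ'))
    (hr : f.comp (inrProd φ φ') = g.comp (inrProd φ φ')) : f = g := by
  refine hom_ext (MonoidHom.ext fun p => ?_) (MonoidHom.ext fun z => DFunLike.congr_fun hl (inr z))
  have hp : (inl p : (H × H') ⋊[prodAut φ φ'] Multiplicative ℤ) =
      inlProd φ φ' (inl p.1) * inrProd φ φ' (inl p.2) := by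
    ext <;> simp [inlProd, inrProd]
  simp only [MonoidHom.comp_apply, hp, map_mul]
  exact congr_arg₂ (· * ·) (DFunLike.congr_fun hl _) (DFunLike.congr_fun hr _)

def prodLift (f : H ⋊[φ] Multiplicative ℤ →* P) (f' : H' ⋊[φ'] Multiplicative ℤ →* P)
    (hinr : f.comp inr = f'.comp inr) (hcomm : ∀ h h', Commute (f (inl h)) (f' (inl h'))) :
    (H × H') ⋊[prodAut φ φ'] Multiplicative ℤ →* P :=
  lift ((f.comp inl).noncommCoprod (f'.comp inl) hcomm) (f.comp inr) fun z => by
    have hz : f' (inr z) = f (inr z) := (DFunLike.congr_fun hinr z).symm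
    ext p
    simp only [MonoidHom.comp_apply, MulEquiv.coe_toMonoidHom, prodAut_apply,
      MonoidHom.noncommCoprod_apply, MulAut.conj_apply, inl_aut, map_mul, map_inv, hz]

@[simp]
theorem prodLift_inlProd (f : H ⋊[φ] Multiplicative ℤ →* P)
    (f' : H' ⋊[φ'] Multiplicative ℤ →* P) (hinr : f.comp inr = f'.comp inr)
    (hcomm : ∀ h h', Commute (f (inl h)) (f' (inl h'))) (x : H ⋊[φ] Multiplicative ℤ) :
    prodLift f f' hinr hcomm (inlProd φ φ' x) = f x := by
  suffices (prodLift f f' hinr hcomm).comp (inlProd φ φ') = f from DFunLike.congr_fun this x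
  refine hom_ext (MonoidHom.ext fun h => ?_) (MonoidHom.ext fun z => ?_) <;>
    simp [prodLift, inlProd]

@[simp]
theorem prodLift_inrProd (f : H ⋊[φ] Multiplicative ℤ →* P)
    (f' : H' ⋊[φ'] Multiplicative ℤ →* P) (hinr : f.comp inr = f'.comp inr)
    (hcomm : ∀ h h', Commute (f (inl h)) (f' (inl h'))) (x : H' ⋊[φ'] Multiplicative ℤ) :
    prodLift f f' hinr hcomm (inrProd φ φ' x) = f' x := by
  suffices (prodLift f f' hinr hcomm).comp (inrProd φ φ') = f' from DFunLike.congr_fun this x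
  refine hom_ext (MonoidHom.ext fun h => ?_) (MonoidHom.ext fun z => ?_)
  · simp [prodLift, inrProd]
  · simpa [prodLift, inrProd] using DFunLike.congr_fun hinr z

end Prod

end SemidirectProduct

abbrev AmalgamatedProduct {G G' : Type*} [Group G] [Group G'] (m : G) (m' : G') : Type _ :=
  Monoid.Coprod G G' ⧸ Subgroup.normalClosure
    {x : Monoid.Coprod G G' | ∃ n : ℤ,
      x = Monoid.Coprod.inl (m ^ n) * (Monoid.Coprod.inr (m' ^ n))⁻¹}

namespace AmalgamatedProduct

variable {G G' P : Type*} [Group G] [Group G'] [Group P] {m : G} {m' : G'}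

def ofLeft : G →* AmalgamatedProduct m m' :=
  (QuotientGroup.mk' _).comp Monoid.Coprod.inl

def ofRight : G' →* AmalgamatedProduct m m' :=
  (QuotientGroup.mk' _).comp Monoid.Coprod.inr

theorem ofLeft_eq_ofRight : (ofLeft m : AmalgamatedProduct m m') = ofRight m' := by
  refine QuotientGroup.eq_iff_div_mem.2 (Subgroup.subset_normalClosure ⟨1, ?_⟩)
  simp [div_eq_mul_inv]

def lift (f : G →* P) (f' : G' →* P) (h : f m = f' m') : AmalgamatedProduct m m' →* P :=
  QuotientGroup.lift _ (Monoid.Coprod.lift f f') <| Subgroup.normalClosure_le_normal <| by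
    rintro _ ⟨n, rfl⟩
    simp [h]

theorem hom_ext {f f' : AmalgamatedProduct m m' →* P} (hl : f.comp ofLeft = f'.comp ofLeft)
    (hr : f.comp ofRight = f'.comp ofRight) : f = f' :=
  QuotientGroup.monoidHom_ext _ (Monoid.Coprod.hom_ext hl hr)

variable {H H' : Type*} [CommGroup H] [CommGroup H']
  {φ : Multiplicative ℤ →* MulAut H} {φ' : Multiplicative ℤ →* MulAut H'}
  {e : G ⧸ derivedSeries G 2 ≃* H ⋊[φ] Multiplicative ℤ}
  {e' : G' ⧸ derivedSeries G' 2 ≃* H' ⋊[φ'] Multiplicative ℤ}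

theorem derivedSeriesMap_ofLeft_comp_inr_eq (he : e m = inr (Multiplicative.ofAdd 1))
    (he' : e' m' = inr (Multiplicative.ofAdd 1)) :
    ((derivedSeriesMap 2 (ofLeft (m := m) (m' := m'))).comp e.symm.toMonoidHom).comp inr =
      ((derivedSeriesMap 2 ofRight).comp e'.symm.toMonoidHom).comp inr := by
  refine MonoidHom.ext_mint ?_
  change derivedSeriesMap 2 ofLeft (e.symm _) = derivedSeriesMap 2 ofRight (e'.symm _)
  rw [e.symm_apply_eq.2 he.symm, e'.symm_apply_eq.2 he'.symm]
  exact congr_arg _ ofLeft_eq_ofRight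

variable (hφ : Function.Surjective fun h : H => φ (Multiplicative.ofAdd 1) h * h⁻¹)
  (hφ' : Function.Surjective fun h : H' => φ' (Multiplicative.ofAdd 1) h * h⁻¹)
  (he : e m = inr (Multiplicative.ofAdd 1)) (he' : e' m' = inr (Multiplicative.ofAdd 1))

def toSemidirectProd :
    AmalgamatedProduct m m' ⧸ derivedSeries (AmalgamatedProduct m m') 2 →*
      (H × H') ⋊[prodAut φ φ'] Multiplicative ℤ :=
  derivedSeriesLift 2
    (lift ((inlProd φ φ').comp (e.toMonoidHom.comp (QuotientGroup.mk' _)))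
      ((inrProd φ φ').comp (e'.toMonoidHom.comp (QuotientGroup.mk' _)))
      (show inlProd φ φ' (e m) = inrProd φ φ' (e' m') by rw [he, he']; rfl))
    (derivedSeries_two_eq_bot _)

theorem toSemidirectProd_derivedSeriesMap_ofLeft (x : G ⧸ derivedSeries G 2) :
    toSemidirectProd he he' (derivedSeriesMap 2 ofLeft x) = inlProd φ φ' (e x) :=
  QuotientGroup.induction_on x fun _ => rfl

theorem toSemidirectProd_derivedSeriesMap_ofRight (x : G' ⧸ derivedSeries G' 2) :
    toSemidirectProd he he' (derivedSeriesMap 2 ofRight x) = inrProd φ φ' (e' x) :=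
  QuotientGroup.induction_on x fun _ => rfl

def ofSemidirectProd :
    (H × H') ⋊[prodAut φ φ'] Multiplicative ℤ →*
      AmalgamatedProduct m m' ⧸ derivedSeries (AmalgamatedProduct m m') 2 :=
  prodLift _ _ (derivedSeriesMap_ofLeft_comp_inr_eq he he')
    (commute_map_inl_of_surjective _ _ (derivedSeries_quotient_derivedSeries 2) hφ hφ')

theorem ofSemidirectProd_inlProd (x : H ⋊[φ] Multiplicative ℤ) :
    ofSemidirectProd hφ hφ' he he' (inlProd φ φ' x) = derivedSeriesMap 2 ofLeft (e.symm x) :=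
  prodLift_inlProd _ _ (derivedSeriesMap_ofLeft_comp_inr_eq he he') _ x

theorem ofSemidirectProd_inrProd (x : H' ⋊[φ'] Multiplicative ℤ) :
    ofSemidirectProd hφ hφ' he he' (inrProd φ φ' x) = derivedSeriesMap 2 ofRight (e'.symm x) :=
  prodLift_inrProd _ _ (derivedSeriesMap_ofLeft_comp_inr_eq he he') _ x

theorem ofSemidirectProd_comp_toSemidirectProd :
    (ofSemidirectProd hφ hφ' he he').comp (toSemidirectProd he he') = MonoidHom.id _ := by
  refine QuotientGroup.monoidHom_ext _ (hom_ext ?_ ?_) <;> ext g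
  · change ofSemidirectProd hφ hφ' he he' (inlProd φ φ' (e g)) = derivedSeriesMap 2 ofLeft g
    rw [ofSemidirectProd_inlProd, e.symm_apply_apply]
  · change ofSemidirectProd hφ hφ' he he' (inrProd φ φ' (e' g)) = derivedSeriesMap 2 ofRight g
    rw [ofSemidirectProd_inrProd, e'.symm_apply_apply]

theorem toSemidirectProd_comp_ofSemidirectProd :
    (toSemidirectProd he he').comp (ofSemidirectProd hφ hφ' he he') = MonoidHom.id _ := by
  refine prod_hom_ext (MonoidHom.ext fun x => ?_) (MonoidHom.ext fun x => ?_)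
  · change toSemidirectProd he he' (ofSemidirectProd hφ hφ' he he' (inlProd φ φ' x)) = _
    rw [ofSemidirectProd_inlProd, toSemidirectProd_derivedSeriesMap_ofLeft, e.apply_symm_apply]
    rfl
  · change toSemidirectProd he he' (ofSemidirectProd hφ hφ' he he' (inrProd φ φ' x)) = _
    rw [ofSemidirectProd_inrProd, toSemidirectProd_derivedSeriesMap_ofRight, e'.apply_symm_apply]
    rfl

end AmalgamatedProduct

theorem metabelian_quotient_of_amalgamated_product_general
    {G G' : Type*} [Group G] [Group G'] (m : G) (m' : G')
    {H H' : Type*} [CommGroup H] [CommGroup H']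
    (φH : Multiplicative ℤ →* MulAut H) (φH' : Multiplicative ℤ →* MulAut H')
    (hbij : Function.Bijective (fun h : H => φH (Multiplicative.ofAdd 1) h * h⁻¹))
    (hbij' : Function.Bijective (fun h : H' => φH' (Multiplicative.ofAdd 1) h * h⁻¹))
    (e : (G ⧸ derivedSeries G 2) ≃* SemidirectProduct H (Multiplicative ℤ) φH)
    (he : e (QuotientGroup.mk m) = SemidirectProduct.inr (Multiplicative.ofAdd 1))
    (e' : (G' ⧸ derivedSeries G' 2) ≃* SemidirectProduct H' (Multiplicative ℤ) φH')
    (he' : e' (QuotientGroup.mk m') = SemidirectProduct.inr (Multiplicative.ofAdd 1)) :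
    letI Amal := (Monoid.Coprod G G') ⧸ Subgroup.normalClosure
      {x : Monoid.Coprod G G' | ∃ n : ℤ,
        x = Monoid.Coprod.inl (m ^ n) * (Monoid.Coprod.inr (m' ^ n))⁻¹}
    Nonempty ((Amal ⧸ derivedSeries Amal 2) ≃*
      SemidirectProduct (H × H') (Multiplicative ℤ) (prodAut φH φH')) :=
  ⟨MonoidHom.toMulEquiv _ _
    (AmalgamatedProduct.ofSemidirectProd_comp_toSemidirectProd hbij.2 hbij'.2 he he')
    (AmalgamatedProduct.toSemidirectProd_comp_ofSemidirectProd hbij.2 hbij'.2 he he')⟩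

/-- Let `G` and `G†` be groups, each with a surjection onto `ℤ` sending a
preferred meridian to `1`, and let `G‡ = G *_ℤ G†` be the amalgamated free product identifying
the meridians (realised as the quotient of the free product by the normal closure of the
relations `inl (m ^ n) = inr (m† ^ n)`).  Suppose `G/G⁽²⁾ ≅ ℤ ⋉ H` and `G†/G†⁽²⁾ ≅ ℤ ⋉ H†`,
with the meridians corresponding to `(1, 0)`, where `H`, `H†` are the Alexander modules (so
`1 - t` acts invertibly on each).  Then `G‡/G‡⁽²⁾ ≅ ℤ ⋉ (H ⊕ H†)`, where `ℤ` acts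
diagonally. -/
theorem metabelian_quotient_of_amalgamated_product
    {G G' : Type*} [Group G] [Group G'] (m : G) (m' : G')
    (χ : G →* Multiplicative ℤ) (hχsurj : Function.Surjective χ)
    (hχm : χ m = Multiplicative.ofAdd 1) (hχker : χ.ker = derivedSeries G 1)
    (χ' : G' →* Multiplicative ℤ) (hχ'surj : Function.Surjective χ')
    (hχ'm : χ' m' = Multiplicative.ofAdd 1) (hχ'ker : χ'.ker = derivedSeries G' 1)
    {H H' : Type*} [CommGroup H] [CommGroup H']
    (φH : Multiplicative ℤ →* MulAut H) (φH' : Multiplicative ℤ →* MulAut H')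
    (hbij : Function.Bijective (fun h : H => φH (Multiplicative.ofAdd 1) h * h⁻¹))
    (hbij' : Function.Bijective (fun h : H' => φH' (Multiplicative.ofAdd 1) h * h⁻¹))
    (e : (G ⧸ derivedSeries G 2) ≃* SemidirectProduct H (Multiplicative ℤ) φH)
    (he : e (QuotientGroup.mk m) = SemidirectProduct.inr (Multiplicative.ofAdd 1))
    (e' : (G' ⧸ derivedSeries G' 2) ≃* SemidirectProduct H' (Multiplicative ℤ) φH')
    (he' : e' (QuotientGroup.mk m') = SemidirectProduct.inr (Multiplicative.ofAdd 1)) :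
    letI Amal := (Monoid.Coprod G G') ⧸ Subgroup.normalClosure
      {x : Monoid.Coprod G G' | ∃ n : ℤ,
        x = Monoid.Coprod.inl (m ^ n) * (Monoid.Coprod.inr (m' ^ n))⁻¹}
    Nonempty ((Amal ⧸ derivedSeries Amal 2) ≃*
      SemidirectProduct (H × H') (Multiplicative ℤ) (prodAut φH φH')) :=
  metabelian_quotient_of_amalgamated_product_general m m' φH φH' hbij hbij' e he e' he'
end
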